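/- Consider a switched matrix-weighted network on n nodes: for each k ∈ ℕ let L^k be a matrix-valued Laplacian (symmetric positive semidefinite with R ⊆ null(L^k)) and let the dwell times satisfy Δt_k ∈ [α, β] with 0 < α ≤ β. For an initial state x_0 ∈ ℝ^{dn} define the state at switching instants by x_{k+1} = exp(−Δt_k L^k) x_k. If for every initial state x_0 the sequence (x_k) converges to the average consensus value x_f = 1_n ⊗ ((1/n) Σ_{i=1}^n (x_0)_i), then there exists a strictly increasing sequence of indices k_0 = 0 < k_1 < k_2 < ⋯ such that for every l ∈ ℕ, the null space of the integral Laplacian Σ_{k=k_l}^{k_{l+1}−1} Δt_k L^k equals R. -/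

import Mathlib

/-!
The common null space of the `L k`, `k ∈ [m, N)`, shrinks as `N` grows, so in finite dimension it
is eventually constant. A vector `x` in the limit space is fixed by every `exp (-(Δt k • L k))` with
`k ≥ m`; these maps are invertible, so `x` is the state at time `m` of some trajectory, which then
stays at `x`. Its limit is the average consensus value, hence `x ∈ R`. Thus every `m` has a window
`[m, N)` whose common null space is `R`, and for positive semidefinite `L k` and positive `Δt k`
that is exactly the null space of `∑ Δt k • L k`. Iterating `m ↦ N` from `0` gives the indices.
-/

open Matrix Finset Filter

/-- The matrix-valued Laplacian of a matrix-weighted graph on `n` nodes with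
state dimension `d`: the `(i,j)` off-diagonal block is `-A i j` and the `i`-th
diagonal block is `∑ k ≠ i, A i k`. -/
noncomputable def mwLaplacian {n d : ℕ} (A : Fin n → Fin n → Matrix (Fin d) (Fin d) ℝ) :
    Matrix (Fin n × Fin d) (Fin n × Fin d) ℝ :=
  fun p q =>
    if p.1 = q.1 then ∑ k ∈ Finset.univ.erase p.1, A p.1 k p.2 q.2
    else -(A p.1 q.1 p.2 q.2)

/-- Membership in the consensus subspace `R = range (1ₙ ⊗ I_d)`:
all blocks of `x` are equal. -/
def isConsensus {n d : ℕ} (x : Fin n × Fin d → ℝ) : Prop :=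
  ∃ v : Fin d → ℝ, ∀ p : Fin n × Fin d, x p = v p.2

/-- The Euclidean norm on `ι → ℝ`. -/
noncomputable def euclNorm {ι : Type*} [Fintype ι] (x : ι → ℝ) : ℝ :=
  Real.sqrt (x ⬝ᵥ x)

/-- The state of the switched system at switching instants:
`x_0 = x0`, `x_{k+1} = E k ⬝ x_k`. -/
noncomputable def stateSeq {ι : Type*} [Fintype ι] [DecidableEq ι]
    (E : ℕ → Matrix ι ι ℝ) (x0 : ι → ℝ) : ℕ → ι → ℝ
  | 0 => x0
  | k + 1 => (E k).mulVec (stateSeq E x0 k)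

open scoped Topology

theorem Submodule.exists_iInf_Ico_le {R M : Type*} [Ring R] [AddCommGroup M] [Module R M]
    [IsArtinian R M] (f : ℕ → Submodule R M) (m : ℕ) :
    ∃ N, m < N ∧ ∀ j, m ≤ j → ⨅ k ∈ Ico m N, f k ≤ f j := by
  set S : ℕ → Submodule R M := fun N => ⨅ k ∈ Ico m N, f k
  have hS : Antitone S := fun N N' h =>
    biInf_mono fun k hk => Finset.Ico_subset_Ico_right h hk
  obtain ⟨_, ⟨N, hmN, rfl⟩, hmin⟩ := IsArtinian.set_has_minimal (S '' Set.Ioi m)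
    ⟨_, Set.mem_image_of_mem S (Set.mem_Ioi.2 m.lt_succ_self)⟩
  refine ⟨N, hmN, fun j hj => ?_⟩
  have hle : S (max N (j + 1)) ≤ S N := hS (le_max_left _ _)
  have heq : S (max N (j + 1)) = S N :=
    hle.eq_of_not_lt (hmin _ ⟨_, Set.mem_Ioi.2 (hmN.trans_le (le_max_left _ _)), rfl⟩)
  change S N ≤ f j
  rw [← heq]
  exact biInf_le f (Finset.mem_Ico.2 ⟨hj, lt_of_lt_of_le j.lt_succ_self (le_max_right _ _)⟩)

theorem Matrix.sum_smul_mulVec_eq_zero_iff {ι κ : Type*} [Fintype ι] {A : κ → Matrix ι ι ℝ}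
    {c : κ → ℝ} {s : Finset κ} (hA : ∀ k ∈ s, (A k).PosSemidef) (hc : ∀ k ∈ s, 0 < c k)
    (x : ι → ℝ) : (∑ k ∈ s, c k • A k) *ᵥ x = 0 ↔ ∀ k ∈ s, A k *ᵥ x = 0 := by
  have hsum : (∑ k ∈ s, c k • A k) *ᵥ x = ∑ k ∈ s, c k • A k *ᵥ x := by
    simp only [Matrix.sum_mulVec, Matrix.smul_mulVec]
  constructor
  · intro h k hk
    have hquad : ∑ j ∈ s, c j * (star x ⬝ᵥ A j *ᵥ x) = 0 := by
      simpa only [hsum, dotProduct_sum, dotProduct_smul, smul_eq_mul, dotProduct_zero]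
        using congrArg (star x ⬝ᵥ ·) h
    have hterm := (Finset.sum_eq_zero_iff_of_nonneg fun j hj =>
      mul_nonneg (hc j hj).le ((hA j hj).dotProduct_mulVec_nonneg x)).1 hquad k hk
    exact ((hA k hk).dotProduct_mulVec_zero_iff x).1
      ((mul_eq_zero.1 hterm).resolve_left (hc k hk).ne')
  · intro h
    rw [hsum]
    exact Finset.sum_eq_zero fun k hk => by rw [h k hk, smul_zero]

open scoped Matrix.Norms.Operator in
theorem Matrix.exp_mulVec_of_mulVec_eq_zero {𝕜 ι : Type*} [RCLike 𝕜] [Fintype ι] [DecidableEq ι]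
    {B : Matrix ι ι 𝕜} {v : ι → 𝕜} (hv : B *ᵥ v = 0) : NormedSpace.exp B *ᵥ v = v := by
  let T : Matrix ι ι 𝕜 →ₗ[𝕜] ι → 𝕜 := (LinearMap.applyₗ v).comp Matrix.toLin'.toLinearMap
  have hseries :=
    (NormedSpace.exp_series_hasSum_exp' (𝕂 := 𝕜) B).map T T.continuous_of_finiteDimensional
  refine hseries.unique (hasSum_single 0 fun k hk => ?_) |>.trans ?_
  · obtain ⟨k, rfl⟩ := Nat.exists_eq_succ_of_ne_zero hk
    simp [T, pow_succ, hv]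
  · simp [T]

theorem Matrix.exp_mulVec_surjective {𝕜 ι : Type*} [RCLike 𝕜] [Fintype ι] [DecidableEq ι]
    (B : Matrix ι ι 𝕜) : Function.Surjective (NormedSpace.exp B *ᵥ ·) :=
  Matrix.mulVec_surjective_iff_isUnit.2 (Matrix.isUnit_exp B)

section stateSeq

variable {ι : Type*} [Fintype ι] [DecidableEq ι] {E : ℕ → Matrix ι ι ℝ}

theorem stateSeq_surjective (hE : ∀ k, Function.Surjective (E k *ᵥ ·)) (m : ℕ) :
    Function.Surjective (stateSeq E · m) := by
  induction m with
  | zero => exact fun w => ⟨w, rfl⟩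
  | succ m ih =>
    intro w
    obtain ⟨y, rfl⟩ := hE m w
    obtain ⟨z, rfl⟩ := ih y
    exact ⟨z, rfl⟩

theorem stateSeq_eq_of_forall_mulVec_eq_self {x0 x : ι → ℝ} {m : ℕ} (hm : stateSeq E x0 m = x)
    (hx : ∀ k, m ≤ k → E k *ᵥ x = x) {k : ℕ} (hk : m ≤ k) : stateSeq E x0 k = x := by
  induction k, hk using Nat.le_induction with
  | base => exact hm
  | succ k hk ih => rw [stateSeq, ih, hx k hk]

theorem mem_range_of_forall_mulVec_eq_self (hE : ∀ k, Function.Surjective (E k *ᵥ ·))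
    {π : (ι → ℝ) → ι → ℝ} (hconv : ∀ x0, Tendsto (stateSeq E x0) atTop (𝓝 (π x0)))
    {x : ι → ℝ} {m : ℕ} (hx : ∀ k, m ≤ k → E k *ᵥ x = x) : x ∈ Set.range π := by
  obtain ⟨x0, hx0⟩ := stateSeq_surjective hE m x
  have hconst : stateSeq E x0 =ᶠ[atTop] fun _ => x :=
    eventually_atTop.2 ⟨m, fun k hk => stateSeq_eq_of_forall_mulVec_eq_self hx0 hx hk⟩
  exact ⟨x0, tendsto_nhds_unique (hconv x0) (tendsto_const_nhds.congr' hconst.symm)⟩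

theorem exists_Ico_forall_mulVec_eq_zero_mem_range (B : ℕ → Matrix ι ι ℝ)
    {π : (ι → ℝ) → ι → ℝ}
    (hconv : ∀ x0, Tendsto (stateSeq (fun k => NormedSpace.exp (-B k)) x0) atTop (𝓝 (π x0)))
    (m : ℕ) : ∃ N, m < N ∧ ∀ x, (∀ k ∈ Ico m N, B k *ᵥ x = 0) → x ∈ Set.range π := by
  obtain ⟨N, hmN, hN⟩ := Submodule.exists_iInf_Ico_le (fun k => LinearMap.ker (B k).mulVecLin) m
  refine ⟨N, hmN, fun x hx => mem_range_of_forall_mulVec_eq_self (m := m)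
    (fun k => Matrix.exp_mulVec_surjective _) hconv fun k hk => ?_⟩
  have hker : x ∈ ⨅ j ∈ Ico m N, LinearMap.ker (B j).mulVecLin := by
    simpa only [Submodule.mem_iInf, LinearMap.mem_ker, Matrix.mulVecLin_apply] using hx
  refine Matrix.exp_mulVec_of_mulVec_eq_zero ?_
  rw [Matrix.neg_mulVec, neg_eq_zero]
  exact hN k hk hker

end stateSeq

theorem average_consensus_implies_null_subsequence_general {n d : ℕ}
    (L : ℕ → Matrix (Fin n × Fin d) (Fin n × Fin d) ℝ) (Δt : ℕ → ℝ) (α β : ℝ)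
    (hα : 0 < α) (hΔ : ∀ k, Δt k ∈ Set.Icc α β)
    (hpsd : ∀ k, (L k).PosSemidef)
    (hR : ∀ k, ∀ x : Fin n × Fin d → ℝ, isConsensus x → (L k).mulVec x = 0)
    (hconv : ∀ x0 : Fin n × Fin d → ℝ,
      Tendsto (stateSeq (fun k => NormedSpace.exp (-(Δt k • L k))) x0) atTop
        (nhds (fun p => (n : ℝ)⁻¹ * ∑ i : Fin n, x0 (i, p.2)))) :
    ∃ ks : ℕ → ℕ, ks 0 = 0 ∧ StrictMono ks ∧
      ∀ l : ℕ, ∀ x : Fin n × Fin d → ℝ,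
        ((∑ k ∈ Finset.Ico (ks l) (ks (l + 1)), Δt k • L k).mulVec x = 0
          ↔ isConsensus x) := by
  have hpos : ∀ k, 0 < Δt k := fun k => hα.trans_le (hΔ k).1
  have window : ∀ m, ∃ N, m < N ∧
      ∀ x, (∀ k ∈ Ico m N, L k *ᵥ x = 0) → isConsensus x := fun m => by
    obtain ⟨N, hmN, hN⟩ := exists_Ico_forall_mulVec_eq_zero_mem_range _ hconv m
    refine ⟨N, hmN, fun x hx => ?_⟩
    obtain ⟨z, rfl⟩ := hN x fun k hk => by rw [Matrix.smul_mulVec, hx k hk, smul_zero]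
    exact ⟨fun j => (n : ℝ)⁻¹ * ∑ i, z (i, j), fun p => rfl⟩
  choose next hlt hnext using window
  refine ⟨fun l => next^[l] 0, rfl, strictMono_nat_of_lt_succ fun l => ?_, fun l x => ?_⟩
  · rw [Function.iterate_succ_apply']
    exact hlt _
  · dsimp only
    rw [Function.iterate_succ_apply',
      Matrix.sum_smul_mulVec_eq_zero_iff (fun k _ => hpsd k) (fun k _ => hpos k)]
    exact ⟨hnext _ x, fun hx k _ => hR k x hx⟩

/-- For a switched matrix-weighted network with Laplacians `L^k`
(symmetric PSD, `R ⊆ null(L^k)`) and dwell times `Δt k ∈ [α, β]`, `0 < α ≤ β`,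
if every initial state converges to its average consensus value, then there is a
strictly increasing sequence of indices `k_0 = 0 < k_1 < ⋯` such that the integral
Laplacian `∑_{k=k_l}^{k_{l+1}-1} Δt_k L^k` has null space `R` for every `l`. -/
theorem average_consensus_implies_null_subsequence {n d : ℕ} (hn : 2 ≤ n) (hd : 1 ≤ d)
    (L : ℕ → Matrix (Fin n × Fin d) (Fin n × Fin d) ℝ) (Δt : ℕ → ℝ) (α β : ℝ)
    (hα : 0 < α) (hαβ : α ≤ β) (hΔ : ∀ k, Δt k ∈ Set.Icc α β)
    (hpsd : ∀ k, (L k).PosSemidef)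
    (hR : ∀ k, ∀ x : Fin n × Fin d → ℝ, isConsensus x → (L k).mulVec x = 0)
    (hconv : ∀ x0 : Fin n × Fin d → ℝ,
      Tendsto (stateSeq (fun k => NormedSpace.exp (-(Δt k • L k))) x0) atTop
        (nhds (fun p => (n : ℝ)⁻¹ * ∑ i : Fin n, x0 (i, p.2)))) :
    ∃ ks : ℕ → ℕ, ks 0 = 0 ∧ StrictMono ks ∧
      ∀ l : ℕ, ∀ x : Fin n × Fin d → ℝ,
        ((∑ k ∈ Finset.Ico (ks l) (ks (l + 1)), Δt k • L k).mulVec x = 0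
          ↔ isConsensus x) :=
  average_consensus_implies_null_subsequence_general L Δt α β hα hΔ hpsd hR hconv
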